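/- arXiv:2603.02750 — 4 statements merged into one kernel-verified Lean document; each statement's English description precedes it below -/
import Mathlib

section
/- Let m ≥ 1 be an integer, C ≥ 0 a real number, and a_0 > a_1 > ... > a_m real numbers. Assume that for every index i with 0 ≤ i < m there exist indices k and j with k ≤ i < j ≤ m such that a_k ≤ a_j + C. Then a_0 − a_m ≤ m·C. -/
/-- Let `m ≥ 1`, `C ≥ 0`, and let `a 0 > a 1 > ⋯ > a m` be real numbers.  If for every
`i < m` there are indices `k ≤ i < j ≤ m` with `a k ≤ a j + C`, then `a 0 - a m ≤ m * C`. -/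
theorem slope_gap_bound (m : ℕ) (hm : 1 ≤ m) (C : ℝ) (hC : 0 ≤ C) (a : ℕ → ℝ)
    (hdec : ∀ i, i < m → a (i + 1) < a i)
    (hstep : ∀ i, i < m → ∃ k j, k ≤ i ∧ i < j ∧ j ≤ m ∧ a k ≤ a j + C) :
    a 0 - a m ≤ (m : ℝ) * C := by
  have mono : ∀ p q, p ≤ q → q ≤ m → a q ≤ a p := by
    intro p q hpq hqm
    induction q with
    | zero => simp_all
    | succ n ih =>
      rcases Nat.eq_or_lt_of_le hpq with h | h
      · simp [h]
      · have hn : p ≤ n := Nat.lt_succ_iff.mp h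
        have hnm : n < m := Nat.lt_of_succ_le hqm
        exact le_trans (le_of_lt (hdec n hnm)) (ih hn (le_of_lt hnm))
  have key : ∀ i, i ≤ m → a 0 - a i ≤ (i : ℝ) * C := by
    intro i hi
    induction i with
    | zero => simp
    | succ n ih =>
      have hnm : n < m := Nat.lt_of_succ_le hi
      obtain ⟨k, j, hk, hj1, hj2, hkj⟩ := hstep n hnm
      have h1 : a n ≤ a k := mono k n hk (le_of_lt hnm)
      have h2 : a j ≤ a (n + 1) := mono (n + 1) j hj1 hj2
      have ih' := ih (le_of_lt hnm)
      push_cast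
      nlinarith
  exact key m le_rfl
end

section
/- Let R be a Noetherian integrally closed integral domain with fraction field F. Let g, h ∈ R be nonzero elements and let m be a maximal ideal of R such that g ∉ m and every minimal prime ideal of R containing h is contained in m. Then R[1/g] ∩ R[1/h] = R inside F. -/
open IsLocalRing

/-- Elements of `R[1/t]` have the form `b / t^k`. -/
lemma aux_adjoin_inv {R F : Type*} [CommRing R] [Field F] [Algebra R F]
    {t : R} (ht : algebraMap R F t ≠ 0) {x : F}
    (hx : x ∈ Algebra.adjoin R {(algebraMap R F t)⁻¹}) :
    ∃ (k : ℕ) (b : R), (algebraMap R F t) ^ k * x = algebraMap R F b := by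
  induction hx using Algebra.adjoin_induction with
  | mem y hy =>
      rw [Set.mem_singleton_iff] at hy
      subst hy
      exact ⟨1, 1, by rw [pow_one, mul_inv_cancel₀ ht, map_one]⟩
  | algebraMap r => exact ⟨0, r, by rw [pow_zero, one_mul]⟩
  | add y z hy hz ihy ihz =>
      obtain ⟨k1, b1, h1⟩ := ihy
      obtain ⟨k2, b2, h2⟩ := ihz
      refine ⟨k1 + k2, t ^ k2 * b1 + t ^ k1 * b2, ?_⟩
      rw [map_add, map_mul, map_mul, map_pow, map_pow, ← h1, ← h2]
      ring
  | mul y z hy hz ihy ihz =>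
      obtain ⟨k1, b1, h1⟩ := ihy
      obtain ⟨k2, b2, h2⟩ := ihz
      refine ⟨k1 + k2, b1 * b2, ?_⟩
      rw [map_mul, ← h1, ← h2]
      ring

/-- If the maximal ideal of a local Noetherian integrally closed domain is the annihilator
of `b` mod `(d)` with `d ≠ 0`, then it is principal. -/
lemma aux_principal {S : Type*} [CommRing S] [IsDomain S] [IsNoetherianRing S]
    [IsLocalRing S] [IsIntegrallyClosed S] {d b : S} (hd : d ≠ 0)
    (hann : ∀ r : S, r ∈ maximalIdeal S ↔ r * b ∈ Ideal.span {d}) :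
    (maximalIdeal S).IsPrincipal := by
  by_cases hbot : maximalIdeal S = ⊥
  · exact ⟨⟨0, by rw [hbot]; exact (Ideal.span_singleton_eq_bot.mpr rfl).symm⟩⟩
  have key : ∀ r ∈ maximalIdeal S, ∃ c, r * b = d * c := by
    intro r hr
    obtain ⟨c, hc⟩ := Ideal.mem_span_singleton'.mp ((hann r).mp hr)
    exact ⟨c, by rw [← hc]; ring⟩
  have hMne : maximalIdeal S ≠ ⊤ := (maximalIdeal.isMaximal S).ne_top
  by_cases hcase : ∀ r ∈ maximalIdeal S, ∀ c, r * b = d * c → c ∈ maximalIdeal S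
  · -- the "integral" case: leads to a contradiction
    exfalso
    set K := FractionRing S
    have hinj := IsFractionRing.injective S K
    have hdK : algebraMap S K d ≠ 0 := fun e => hd (hinj (by rw [e, map_zero]))
    set z : K := algebraMap S K b / algebraMap S K d with hz
    set N : Submodule S K := Submodule.map (Algebra.linearMap S K) (maximalIdeal S) with hN
    have hNne : N ≠ ⊥ := by
      intro hNb
      apply hbot
      rw [eq_bot_iff]
      intro r hr
      have h1 : Algebra.linearMap S K r ∈ N := Submodule.mem_map_of_mem hr
      rw [hNb, Submodule.mem_bot] at h1
      have : r = 0 := hinj (by simpa using h1)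
      simp [this]
    have hNfg : N.FG := (IsNoetherian.noetherian (maximalIdeal S)).map _
    have hsmul : ∀ y ∈ N, z • y ∈ N := by
      rintro _ ⟨r, hr, rfl⟩
      obtain ⟨c, hc⟩ := key r hr
      have hcM : c ∈ maximalIdeal S := hcase r hr c hc
      have heq : z • (Algebra.linearMap S K r) = Algebra.linearMap S K c := by
        simp only [Algebra.linearMap_apply, smul_eq_mul, hz]
        rw [div_mul_eq_mul_div, div_eq_iff hdK, ← map_mul, ← map_mul, mul_comm b r, hc,
          mul_comm d c]
      rw [heq]
      exact Submodule.mem_map_of_mem hcM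
    have hint : IsIntegral S z := isIntegral_of_smul_mem_submodule N hNne hNfg z hsmul
    obtain ⟨s, hs⟩ := IsIntegrallyClosed.isIntegral_iff.mp hint
    have hbds : b = d * s := by
      apply hinj
      rw [map_mul, hs, hz, mul_div_cancel₀ _ hdK]
    have : (1 : S) ∈ maximalIdeal S := (hann 1).mpr (by
      rw [one_mul, hbds]
      exact Ideal.mem_span_singleton'.mpr ⟨s, mul_comm s d⟩)
    exact hMne (Ideal.eq_top_iff_one _ |>.mpr this)
  · push_neg at hcase
    obtain ⟨r, hr, c, hc, hcM⟩ := hcase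
    have hcu : IsUnit c := by
      by_contra hnc
      exact hcM ((mem_maximalIdeal c).mpr hnc)
    obtain ⟨u, rfl⟩ := hcu
    refine ⟨⟨r * ↑u⁻¹, le_antisymm ?_ ?_⟩⟩
    · intro s hs
      obtain ⟨e, he⟩ := key s hs
      have hse : s * ↑u = r * e := by
        have h1 : d * (s * ↑u) = d * (r * e) := by
          calc d * (s * ↑u) = s * (d * ↑u) := by ring
            _ = s * (r * b) := by rw [← hc]
            _ = r * (s * b) := by ring
            _ = r * (d * e) := by rw [he]
            _ = d * (r * e) := by ring
        exact mul_left_cancel₀ hd h1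
      refine Ideal.mem_span_singleton'.mpr ⟨e, ?_⟩
      calc e * (r * ↑u⁻¹) = r * e * ↑u⁻¹ := by ring
        _ = s * ↑u * ↑u⁻¹ := by rw [hse]
        _ = s * (↑u * ↑u⁻¹) := by ring
        _ = s := by rw [Units.mul_inv, mul_one]
    · rw [Submodule.span_le, Set.singleton_subset_iff]
      exact Ideal.mul_mem_right _ _ hr

/-- In a local Noetherian domain with principal maximal ideal, every nonzero prime is maximal. -/
lemma aux_eq_max (S : Type*) [CommRing S] [IsDomain S] [IsNoetherianRing S] [IsLocalRing S]
    (hprin : (maximalIdeal S).IsPrincipal) :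
    ∀ P : Ideal S, P ≠ ⊥ → P.IsPrime → P = maximalIdeal S := by
  have := ((tfae_of_isNoetherianRing_of_isLocalRing_of_isDomain S).out 4 3).mp hprin
  exact this.2

/-- In a Noetherian integrally closed domain, every associated prime of `R/(d)` (`d ≠ 0`)
is a minimal prime over `(d)`. -/
lemma aux_minimal {R : Type*} [CommRing R] [IsDomain R] [IsNoetherianRing R]
    [IsIntegrallyClosed R] {d : R} (hd : d ≠ 0) {p : Ideal R}
    (hp : IsAssociatedPrime p (R ⧸ Ideal.span ({d} : Set R))) :
    p ∈ (Ideal.span ({d} : Set R)).minimalPrimes := by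
  obtain ⟨hprime, x, hx⟩ := isAssociatedPrime_iff.mp hp
  obtain ⟨b, rfl⟩ := Ideal.Quotient.mk_surjective x
  haveI := hprime
  have hmem : ∀ r : R, r ∈ p ↔ r * b ∈ Ideal.span ({d} : Set R) := by
    intro r
    rw [hx, Submodule.mem_colon_singleton, Submodule.mem_bot]
    have : r • (Ideal.Quotient.mk (Ideal.span ({d} : Set R)) b)
        = Ideal.Quotient.mk (Ideal.span ({d} : Set R)) (r * b) := rfl
    rw [this, Ideal.Quotient.eq_zero_iff_mem]
  have hdp : Ideal.span ({d} : Set R) ≤ p := by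
    rw [Ideal.span_le, Set.singleton_subset_iff]
    rw [SetLike.mem_coe, hmem]
    exact Ideal.mul_mem_right _ _ (Ideal.mem_span_singleton_self d)
  set S := Localization.AtPrime p with hS
  haveI : IsNoetherianRing S := IsLocalization.isNoetherianRing p.primeCompl S ‹_›
  haveI : IsIntegrallyClosed S :=
    isIntegrallyClosed_of_isLocalization S p.primeCompl p.primeCompl_le_nonZeroDivisors
  set ι := algebraMap R S with hι
  have hinj : Function.Injective ι :=
    IsLocalization.injective S p.primeCompl_le_nonZeroDivisors
  have hd' : ι d ≠ 0 := fun e => hd (hinj (by rw [e, map_zero]))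
  have hmapeq : Ideal.map ι p = maximalIdeal S := Localization.AtPrime.map_eq_maximalIdeal
  have hJle : ∀ s ∈ maximalIdeal S, s * ι b ∈ Ideal.span {ι d} := by
    intro s hs
    rw [← hmapeq, Ideal.map] at hs
    induction hs using Submodule.span_induction with
    | mem y hy =>
        obtain ⟨r, hr, rfl⟩ := hy
        obtain ⟨c, hc⟩ := Ideal.mem_span_singleton'.mp ((hmem r).mp hr)
        exact Ideal.mem_span_singleton'.mpr ⟨ι c, by rw [← map_mul, ← map_mul, hc]⟩
    | zero => simp
    | add y z _ _ ihy ihz => rw [add_mul]; exact Ideal.add_mem _ ihy ihz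
    | smul a y _ ih => rw [smul_eq_mul, mul_assoc]; exact Ideal.mul_mem_left _ _ ih
  have hbne : ι b ∉ Ideal.span ({ι d} : Set S) := by
    intro hmem'
    obtain ⟨s, hs⟩ := Ideal.mem_span_singleton'.mp hmem'
    obtain ⟨⟨r, u⟩, hru⟩ := IsLocalization.surj p.primeCompl s
    simp only at hru
    have hub : (u : R) * b = r * d := by
      apply hinj
      rw [map_mul, map_mul, ← hs, ← hru]
      ring
    have : (u : R) ∈ p := (hmem u).mpr (Ideal.mem_span_singleton'.mpr ⟨r, hub.symm⟩)
    exact u.2 this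
  have hann : ∀ s : S, s ∈ maximalIdeal S ↔ s * ι b ∈ Ideal.span {ι d} := by
    intro s
    refine ⟨hJle s, fun hs => ?_⟩
    by_contra hsM
    have hu : IsUnit s := by
      by_contra hnu
      exact hsM ((mem_maximalIdeal s).mpr hnu)
    obtain ⟨v, rfl⟩ := hu
    apply hbne
    have h2 : (↑v⁻¹ : S) * (↑v * ι b) ∈ Ideal.span ({ι d} : Set S) :=
      Ideal.mul_mem_left _ _ hs
    rwa [← mul_assoc, Units.inv_mul, one_mul] at h2
  have hprin : (maximalIdeal S).IsPrincipal := aux_principal hd' hann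
  have hprimes := aux_eq_max S hprin
  refine ⟨⟨hprime, hdp⟩, ?_⟩
  rintro q ⟨hq, hdq⟩ hqp
  haveI := hq
  have hdisj : Disjoint (p.primeCompl : Set R) (q : Set R) := by
    rw [Set.disjoint_left]
    intro a ha haq
    exact ha (hqp haq)
  have hdisjp : Disjoint (p.primeCompl : Set R) (p : Set R) := by
    rw [Set.disjoint_left]
    intro a ha hap
    exact ha hap
  have hq' : (q.map ι).IsPrime :=
    IsLocalization.isPrime_of_isPrime_disjoint p.primeCompl S q hq hdisj
  have hq'ne : q.map ι ≠ ⊥ := by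
    intro hb
    have h3 : ι d ∈ q.map ι :=
      Ideal.mem_map_of_mem ι (hdq (Ideal.mem_span_singleton_self d))
    rw [hb] at h3
    exact hd' ((Submodule.mem_bot S).mp h3)
  have hmaps : q.map ι = maximalIdeal S := hprimes _ hq'ne hq'
  have h1 : Ideal.comap ι (q.map ι) = q :=
    IsLocalization.comap_map_of_isPrime_disjoint p.primeCompl S hq hdisj
  have h2 : Ideal.comap ι (p.map ι) = p :=
    IsLocalization.comap_map_of_isPrime_disjoint p.primeCompl S hprime hdisjp
  rw [hmaps, ← hmapeq, h2] at h1
  exact h1.le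

/-- Let `R` be a Noetherian integrally closed domain with fraction field `F`, let
`g, h ∈ R` be nonzero, and let `m` be a maximal ideal with `g ∉ m` such that every minimal
prime over `(h)` is contained in `m`.  Then `R[1/g] ∩ R[1/h] = R` inside `F`, where
`R[1/g]` denotes the `R`-subalgebra of `F` generated by `1/g`. -/
theorem localization_inter_eq_self
    (R : Type*) [CommRing R] [IsDomain R] [IsNoetherianRing R] [IsIntegrallyClosed R]
    (g h : R) (hg0 : g ≠ 0) (hh0 : h ≠ 0)
    (m : Ideal R) [m.IsMaximal] (hgm : g ∉ m)
    (hmin : ∀ p ∈ (Ideal.span ({h} : Set R)).minimalPrimes, p ≤ m) :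
    Algebra.adjoin R {(algebraMap R (FractionRing R) g)⁻¹} ⊓
      Algebra.adjoin R {(algebraMap R (FractionRing R) h)⁻¹} = ⊥ := by
  rw [eq_bot_iff]
  intro x hx
  obtain ⟨hxg, hxh⟩ := hx
  have hinj := IsFractionRing.injective R (FractionRing R)
  have hgF : algebraMap R (FractionRing R) g ≠ 0 := fun e => hg0 (hinj (by rw [e, map_zero]))
  have hhF : algebraMap R (FractionRing R) h ≠ 0 := fun e => hh0 (hinj (by rw [e, map_zero]))
  obtain ⟨n, a, ha⟩ := aux_adjoin_inv hgF hxg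
  obtain ⟨k, b, hb⟩ := aux_adjoin_inv hhF hxh
  rw [Algebra.mem_bot]
  by_contra hxR
  exfalso
  have hb0 : Ideal.Quotient.mk (Ideal.span ({h ^ k} : Set R)) b ≠ 0 := by
    rw [Ne, Ideal.Quotient.eq_zero_iff_mem, Ideal.mem_span_singleton']
    rintro ⟨c, hc⟩
    apply hxR
    refine ⟨c, ?_⟩
    have h1 : (algebraMap R (FractionRing R) h) ^ k * algebraMap R (FractionRing R) c
        = (algebraMap R (FractionRing R) h) ^ k * x := by
      rw [hb, ← map_pow, ← map_mul, mul_comm, hc]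
    exact mul_left_cancel₀ (pow_ne_zero _ hhF) h1
  obtain ⟨p, hpA, hple⟩ := exists_le_isAssociatedPrime_of_isNoetherianRing R _ hb0
  have hgnb : g ^ n * b ∈ Ideal.span ({h ^ k} : Set R) := by
    have h2 : g ^ n * b = h ^ k * a := by
      apply hinj
      rw [map_mul, map_mul, map_pow, map_pow, ← hb, ← ha]
      ring
    exact Ideal.mem_span_singleton.mpr ⟨a, h2⟩
  have hgp : g ∈ p := by
    have h3 : g ^ n ∈ p := by
      apply hple
      rw [Submodule.mem_colon_singleton, Submodule.mem_bot]
      have : (g ^ n) • (Ideal.Quotient.mk (Ideal.span ({h ^ k} : Set R)) b)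
          = Ideal.Quotient.mk (Ideal.span ({h ^ k} : Set R)) (g ^ n * b) := rfl
      rw [this, Ideal.Quotient.eq_zero_iff_mem]
      exact hgnb
    exact hpA.isPrime.mem_of_pow_mem n h3
  have hmin' := aux_minimal (pow_ne_zero k hh0) hpA
  obtain ⟨⟨hpp, hple'⟩, hmin''⟩ := hmin'
  have hkpos : 0 < k := by
    rcases Nat.eq_zero_or_pos k with rfl | hk
    · exfalso
      apply hpp.ne_top
      rw [Ideal.eq_top_iff_one]
      exact hple' (by simp)
    · exact hk
  have hpmin : p ∈ (Ideal.span ({h} : Set R)).minimalPrimes := by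
    refine ⟨⟨hpp, ?_⟩, ?_⟩
    · rw [Ideal.span_le, Set.singleton_subset_iff, SetLike.mem_coe]
      exact hpp.mem_of_pow_mem k (hple' (Ideal.mem_span_singleton_self _))
    · rintro q ⟨hq, hhq⟩ hqp
      refine hmin'' ⟨hq, ?_⟩ hqp
      rw [Ideal.span_le, Set.singleton_subset_iff, SetLike.mem_coe]
      exact Ideal.pow_mem_of_mem _ (hhq (Ideal.mem_span_singleton_self h)) k hkpos
  exact hgm (hmin p hpmin hgp)
end

section
/- Let K be a field of characteristic 0 and let K((x)) be the field of formal Laurent series over K, with x-adic valuation v and formal derivative D (the unique additive, coefficientwise derivative sending x^n to n·x^{n−1} for every integer n). Let N ≥ 1 be an integer and let a = Σ_{i=1}^{N} c_i x^{−i} with c_i ∈ K and c_N ≠ 0. Then for every nonzero g ∈ K((x)): v( x·D(g) + x·D(a)·g ) = v(g) − N. Consequently, if M is an integer such that (x·D(g) + x·D(a)·g)/g lies in x^{−M}·K[[x]], then M ≥ N. -/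
/-- Let `K` be a field of characteristic `0`, and let `D` be the formal derivative on the
field of formal Laurent series `K((x))` — the unique additive coefficientwise operator with
`D (x^n) = n • x^(n-1)` for all `n : ℤ`, i.e. `(D f).coeff k = (k+1) * f.coeff (k+1)`.
Let `a = ∑_{i=1}^{N} c_i x^{-i}` with `N ≥ 1` and `c_N ≠ 0`.  Then for every nonzero `g`,
the element `x·D(g) + x·D(a)·g` is nonzero of `x`-adic valuation (order) `order g - N`;
consequently, if all coefficients of `(x·D(g) + x·D(a)·g)/g` in degrees `< -M` vanish
(i.e. it lies in `x^{-M}·K[[x]]`), then `M ≥ N`. -/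
theorem order_of_twisted_log_derivative
    (K : Type*) [Field K] [CharZero K]
    (D : LaurentSeries K → LaurentSeries K)
    (hD_add : ∀ f g : LaurentSeries K, D (f + g) = D f + D g)
    (hD_coeff : ∀ (f : LaurentSeries K) (k : ℤ),
      (D f).coeff k = ((k + 1 : ℤ) : K) * f.coeff (k + 1))
    (N : ℕ) (hN : 1 ≤ N) (a : LaurentSeries K)
    (ha_top : a.coeff (-(N : ℤ)) ≠ 0)
    (ha_supp : ∀ k : ℤ, (k < -(N : ℤ) ∨ 0 ≤ k) → a.coeff k = 0)
    (g : LaurentSeries K) (hg : g ≠ 0) :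
    (HahnSeries.single (1 : ℤ) (1 : K) * D g
        + HahnSeries.single (1 : ℤ) (1 : K) * D a * g ≠ 0 ∧
      (HahnSeries.single (1 : ℤ) (1 : K) * D g
        + HahnSeries.single (1 : ℤ) (1 : K) * D a * g).order = g.order - (N : ℤ)) ∧
    ∀ M : ℤ,
      (∀ k : ℤ, k < -M →
        ((HahnSeries.single (1 : ℤ) (1 : K) * D g
          + HahnSeries.single (1 : ℤ) (1 : K) * D a * g) / g).coeff k = 0) →
      (N : ℤ) ≤ M := by
  -- coefficient formula for the Euler operator x·D
  have hxD : ∀ (f : LaurentSeries K) (k : ℤ),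
      (HahnSeries.single (1 : ℤ) (1 : K) * D f).coeff k = (k : K) * f.coeff k := by
    intro f k
    have : (HahnSeries.single (1 : ℤ) (1 : K) * D f).coeff ((k - 1) + 1)
        = 1 * (D f).coeff (k - 1) := HahnSeries.coeff_single_mul_add
    rw [sub_add_cancel] at this
    rw [this, one_mul, hD_coeff, sub_add_cancel]
  set h : LaurentSeries K := HahnSeries.single (1 : ℤ) (1 : K) * D a with hh
  -- h is nonzero with order -N
  have hhc : h.coeff (-(N : ℤ)) ≠ 0 := by
    rw [hh, hxD]
    apply mul_ne_zero _ ha_top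
    have : (N : ℤ) ≠ 0 := by omega
    simpa using this
  have hhne : h ≠ 0 := fun h0 => hhc (by rw [h0]; rfl)
  have hhlow : ∀ k : ℤ, k < -(N : ℤ) → h.coeff k = 0 := by
    intro k hk
    rw [hh, hxD, ha_supp k (Or.inl hk), mul_zero]
  have hhord : h.order = -(N : ℤ) := by
    apply le_antisymm (HahnSeries.order_le_of_coeff_ne_zero hhc)
    by_contra hlt
    push_neg at hlt
    exact (mt HahnSeries.coeff_order_eq_zero.mp hhne) (hhlow _ hlt)
  have hpne : h * g ≠ 0 := mul_ne_zero hhne hg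
  have hpord : (h * g).order = g.order - (N : ℤ) := by
    rw [HahnSeries.order_mul hhne hg, hhord]; ring
  set L : LaurentSeries K := HahnSeries.single (1 : ℤ) (1 : K) * D g + h * g with hL
  have hqzero : ∀ k : ℤ, k < g.order →
      (HahnSeries.single (1 : ℤ) (1 : K) * D g).coeff k = 0 := by
    intro k hk
    rw [hxD, HahnSeries.coeff_eq_zero_of_lt_order hk, mul_zero]
  have hLc : L.coeff (g.order - (N : ℤ)) ≠ 0 := by
    rw [hL, HahnSeries.coeff_add, hqzero _ (by omega)]
    rw [zero_add]
    have := (mt HahnSeries.coeff_order_eq_zero.mp hpne)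
    rwa [hpord] at this
  have hLne : L ≠ 0 := fun h0 => hLc (by rw [h0]; rfl)
  have hLlow : ∀ k : ℤ, k < g.order - (N : ℤ) → L.coeff k = 0 := by
    intro k hk
    rw [hL, HahnSeries.coeff_add, hqzero _ (by omega),
      HahnSeries.coeff_eq_zero_of_lt_order (by rw [hpord]; exact hk), add_zero]
  have hLord : L.order = g.order - (N : ℤ) := by
    apply le_antisymm (HahnSeries.order_le_of_coeff_ne_zero hLc)
    by_contra hlt
    push_neg at hlt
    exact (mt HahnSeries.coeff_order_eq_zero.mp hLne) (hLlow _ hlt)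
  refine ⟨⟨hLne, hLord⟩, ?_⟩
  intro M hM
  have hdne : L / g ≠ 0 := div_ne_zero hLne hg
  have hdm : L / g * g = L := div_mul_cancel₀ L hg
  have hdord : (L / g).order = -(N : ℤ) := by
    have := HahnSeries.order_mul hdne hg
    rw [hdm, hLord] at this
    omega
  have hdc : (L / g).coeff (-(N : ℤ)) ≠ 0 := by
    have := (mt HahnSeries.coeff_order_eq_zero.mp hdne)
    rwa [hdord] at this
  by_contra hMN
  push_neg at hMN
  exact hdc (hM _ (by omega))
end

section
/- Let R be a commutative ring in which every positive integer is invertible (for example a ℚ-algebra). Set A = R[[x]] and à = A[1/x], and let D denote the formal derivative on Ã. Let E be a finite free A-module and Ẽ = E ⊗_A Ã. Let θ : Ẽ → Ẽ be an additive map satisfying θ(f·s) = x·D(f)·s + f·θ(s) for all f ∈ à and s ∈ Ẽ. Assume there exist an integer m ≥ 1 and a unit u ∈ A^× such that, setting b = x·D(x^{−m}·u) ∈ Ã, one has (θ − b·id)(E) ⊆ E. Then the smallest A-submodule of Ẽ containing E and stable under θ is Ẽ itself. -/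
open scoped TensorProduct


open scoped TensorProduct
open HahnSeries

private lemma auxCoeffSingleMul {R : Type*} [CommRing R] (a : ℤ) (r : R)
    (x : LaurentSeries R) (k : ℤ) :
    (HahnSeries.single a r * x).coeff k = r * x.coeff (k - a) := by
  have := HahnSeries.coeff_single_mul_add (r := r) (x := x) (a := k - a) (b := a)
  simpa using this

private lemma auxXDSingle {R : Type*} [CommRing R]
    (D : LaurentSeries R → LaurentSeries R)
    (hD_coeff : ∀ (f : LaurentSeries R) (k : ℤ),
      (D f).coeff k = ((k + 1 : ℤ) : R) * f.coeff (k + 1))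
    (n : ℤ) :
    HahnSeries.single (1 : ℤ) (1 : R) * D (HahnSeries.single n (1 : R))
      = HahnSeries.single n ((n : ℤ) : R) := by
  ext k
  rw [auxCoeffSingleMul, hD_coeff]
  simp only [sub_add_cancel, HahnSeries.coeff_single, one_mul]
  split_ifs with h
  · subst h; simp
  · simp

private lemma auxB {R : Type*} [CommRing R]
    (D : LaurentSeries R → LaurentSeries R)
    (hD_coeff : ∀ (f : LaurentSeries R) (k : ℤ),
      (D f).coeff k = ((k + 1 : ℤ) : R) * f.coeff (k + 1))
    (m : ℕ) (u : PowerSeries R) :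
    HahnSeries.single (1:ℤ) (1:R) *
        D (HahnSeries.single (-(m:ℤ)) (1:R) * algebraMap (PowerSeries R) (LaurentSeries R) u)
      = HahnSeries.single (-(m:ℤ)) (1:R) *
        algebraMap (PowerSeries R) (LaurentSeries R)
          (PowerSeries.mk fun j => ((j : R) - (m : R)) * PowerSeries.coeff j u) := by
  ext k
  rw [auxCoeffSingleMul, hD_coeff, auxCoeffSingleMul, auxCoeffSingleMul]
  simp only [sub_add_cancel, one_mul, sub_neg_eq_add, LaurentSeries.coe_algebraMap]
  rw [PowerSeries.coeff_coe, PowerSeries.coeff_coe]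
  split_ifs with h
  · simp
  · rw [PowerSeries.coeff_mk]
    have h' : (0:ℤ) ≤ k + m := not_lt.mp h
    have h2 : (((k + (m:ℤ)).natAbs : ℕ) : R) = (k : R) + (m : R) := by
      rw [← Int.cast_natCast (R := R), Int.natAbs_of_nonneg h']
      push_cast; ring
    rw [h2]; ring

set_option maxHeartbeats 1000000 in
/-- Let `R` be a commutative ring in which every positive integer is invertible, let
`A = R[[x]]`, `Ã = A[1/x]` (the Laurent series ring), and let `D` be the formal derivative
on `Ã` (characterized coefficientwise).  Let `E` be a finite free `A`-module and
`Ẽ = Ã ⊗[A] E`, and let `θ : Ẽ → Ẽ` be additive with `θ(f • s) = (x·D f) • s + f • θ s`.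
If there are `m ≥ 1` and a unit `u ∈ A^×` such that, with `b = x·D(x^{-m}·u)`, the operator
`θ - b·id` maps (the image of) `E` into itself, then the smallest `A`-submodule of `Ẽ`
containing `E` and stable under `θ` is `Ẽ` itself: every `θ`-stable `A`-submodule
containing `E` is all of `Ẽ`. -/
theorem vD_module_generated_by_good_lattice_is_everything
    (R : Type*) [CommRing R]
    (hinv : ∀ n : ℕ, 0 < n → IsUnit (n : R))
    (D : LaurentSeries R → LaurentSeries R)
    (hD_add : ∀ f g : LaurentSeries R, D (f + g) = D f + D g)
    (hD_coeff : ∀ (f : LaurentSeries R) (k : ℤ),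
      (D f).coeff k = ((k + 1 : ℤ) : R) * f.coeff (k + 1))
    (E : Type*) [AddCommGroup E] [Module (PowerSeries R) E]
    [Module.Free (PowerSeries R) E] [Module.Finite (PowerSeries R) E]
    (θ : LaurentSeries R ⊗[PowerSeries R] E → LaurentSeries R ⊗[PowerSeries R] E)
    (hθ_add : ∀ s t, θ (s + t) = θ s + θ t)
    (hθ_leibniz : ∀ (f : LaurentSeries R) (s : LaurentSeries R ⊗[PowerSeries R] E),
      θ (f • s) = (HahnSeries.single (1 : ℤ) (1 : R) * D f) • s + f • θ s)
    (m : ℕ) (hm : 1 ≤ m) (u : (PowerSeries R)ˣ)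
    (hθE : ∀ s ∈ LinearMap.range (TensorProduct.mk (PowerSeries R) (LaurentSeries R) E 1),
      θ s - (HahnSeries.single (1 : ℤ) (1 : R) *
          D (HahnSeries.single (-(m : ℤ)) (1 : R) *
            algebraMap (PowerSeries R) (LaurentSeries R) (u : PowerSeries R))) • s
        ∈ LinearMap.range (TensorProduct.mk (PowerSeries R) (LaurentSeries R) E 1)) :
    ∀ N : Submodule (PowerSeries R) (LaurentSeries R ⊗[PowerSeries R] E),
      LinearMap.range (TensorProduct.mk (PowerSeries R) (LaurentSeries R) E 1) ≤ N →
      (∀ s ∈ N, θ s ∈ N) → N = ⊤ := by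
  intro N hEN hθN
  set c : PowerSeries R :=
    PowerSeries.mk fun j => ((j : R) - (m : R)) * PowerSeries.coeff j (u : PowerSeries R)
    with hc_def
  have hcu : IsUnit c := by
    rw [PowerSeries.isUnit_iff_constantCoeff]
    have h0 : PowerSeries.constantCoeff c
        = -((m : R) * PowerSeries.constantCoeff (u : PowerSeries R)) := by
      simp only [← PowerSeries.coeff_zero_eq_constantCoeff, hc_def, PowerSeries.coeff_mk]
      push_cast; ring
    rw [h0]
    exact ((hinv m hm).mul (PowerSeries.isUnit_constantCoeff _ u.isUnit)).neg
  have hmem : ∀ e : E, (1 : LaurentSeries R) ⊗ₜ[PowerSeries R] e ∈ N := fun e => hEN ⟨e, rfl⟩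
  have key : ∀ (k : ℕ) (e : E),
      (HahnSeries.single (-(k * m : ℕ) : ℤ) (1:R)) •
        ((1 : LaurentSeries R) ⊗ₜ[PowerSeries R] e) ∈ N := by
    intro k
    induction k with
    | zero => intro e; simpa using hmem e
    | succ k ih =>
      have step : ∀ e : E,
          (HahnSeries.single (-((k+1) * m : ℕ) : ℤ) (1:R)) •
            ((1 : LaurentSeries R) ⊗ₜ[PowerSeries R] (c • e)) ∈ N := by
        intro e
        set w : LaurentSeries R ⊗[PowerSeries R] E :=
          (1 : LaurentSeries R) ⊗ₜ[PowerSeries R] e with hw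
        obtain ⟨e₂, he₂⟩ := hθE w ⟨e, rfl⟩
        rw [TensorProduct.mk_apply] at he₂
        have hθw : θ w = (HahnSeries.single (-(m:ℤ)) (1:R) *
              algebraMap (PowerSeries R) (LaurentSeries R) c) • w
            + (1 : LaurentSeries R) ⊗ₜ[PowerSeries R] e₂ := by
          have h := sub_eq_iff_eq_add.mp he₂.symm
          rw [auxB D hD_coeff m (u : PowerSeries R), ← hc_def] at h
          rw [h]; abel
        have hθs := hθ_leibniz (HahnSeries.single (-(k*m:ℕ):ℤ) (1:R)) w
        rw [auxXDSingle D hD_coeff (-(k*m:ℕ):ℤ), hθw, smul_add] at hθs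
        have hA : HahnSeries.single (-(k*m:ℕ):ℤ) (1:R) •
              ((HahnSeries.single (-(m:ℤ)) (1:R) *
                algebraMap (PowerSeries R) (LaurentSeries R) c) • w)
            = θ (HahnSeries.single (-(k*m:ℕ):ℤ) (1:R) • w)
              - HahnSeries.single (-(k*m:ℕ):ℤ) (((-(k*m:ℕ):ℤ)):R) • w
              - HahnSeries.single (-(k*m:ℕ):ℤ) (1:R) •
                  ((1 : LaurentSeries R) ⊗ₜ[PowerSeries R] e₂) := by
          rw [hθs]; abel
        have hL : HahnSeries.single (-(k*m:ℕ):ℤ) (1:R) •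
              ((HahnSeries.single (-(m:ℤ)) (1:R) *
                algebraMap (PowerSeries R) (LaurentSeries R) c) • w)
            = HahnSeries.single (-((k+1)*m:ℕ):ℤ) (1:R) •
              ((1 : LaurentSeries R) ⊗ₜ[PowerSeries R] (c • e)) := by
          have e1 : HahnSeries.single (-(k*m:ℕ):ℤ) (1:R) •
                ((HahnSeries.single (-(m:ℤ)) (1:R) *
                  algebraMap (PowerSeries R) (LaurentSeries R) c) • w)
              = ((HahnSeries.single (-(k*m:ℕ):ℤ) (1:R) *
                  (HahnSeries.single (-(m:ℤ)) (1:R) *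
                    algebraMap (PowerSeries R) (LaurentSeries R) c))) • w :=
            smul_smul (HahnSeries.single (-(k*m:ℕ):ℤ) (1:R) : LaurentSeries R) _ _
          have e2 : (HahnSeries.single ((-(k*m:ℕ):ℤ) + (-(m:ℤ))) (1*1 : R) *
                algebraMap (PowerSeries R) (LaurentSeries R) c) • w
              = HahnSeries.single ((-(k*m:ℕ):ℤ) + (-(m:ℤ))) (1*1 : R) •
                ((algebraMap (PowerSeries R) (LaurentSeries R) c) • w) :=
            mul_smul (HahnSeries.single ((-(k*m:ℕ):ℤ) + (-(m:ℤ))) (1*1 : R) : LaurentSeries R) _ _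
          rw [e1, ← mul_assoc, HahnSeries.single_mul_single, e2]
          have hcw : (algebraMap (PowerSeries R) (LaurentSeries R) c) • w
              = (1 : LaurentSeries R) ⊗ₜ[PowerSeries R] (c • e) := by
            rw [algebraMap_smul, hw]
            exact (TensorProduct.tmul_smul c (1 : LaurentSeries R) e).symm
          rw [hcw, one_mul]
          congr 2
          push_cast; ring
        have h1 : θ (HahnSeries.single (-(k*m:ℕ):ℤ) (1:R) • w) ∈ N := hθN _ (ih e)
        have h2 : HahnSeries.single (-(k*m:ℕ):ℤ) (((-(k*m:ℕ):ℤ)):R) • w ∈ N := by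
          have hsm : HahnSeries.single (-(k*m:ℕ):ℤ) (((-(k*m:ℕ):ℤ)):R) • w
              = (PowerSeries.C (((-(k*m:ℕ):ℤ)):R)) •
                  (HahnSeries.single (-(k*m:ℕ):ℤ) (1:R) • w) := by
            have e3 : (PowerSeries.C (((-(k*m:ℕ):ℤ)):R)) •
                  (HahnSeries.single (-(k*m:ℕ):ℤ) (1:R) • w)
                = (algebraMap (PowerSeries R) (LaurentSeries R)
                    (PowerSeries.C (((-(k*m:ℕ):ℤ)):R))) •
                  (HahnSeries.single (-(k*m:ℕ):ℤ) (1:R) • w) :=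
              (algebraMap_smul (LaurentSeries R) _ _).symm
            have e4 : (algebraMap (PowerSeries R) (LaurentSeries R)
                    (PowerSeries.C (((-(k*m:ℕ):ℤ)):R))) •
                  (HahnSeries.single (-(k*m:ℕ):ℤ) (1:R) • w)
                = ((algebraMap (PowerSeries R) (LaurentSeries R)
                    (PowerSeries.C (((-(k*m:ℕ):ℤ)):R))) *
                    HahnSeries.single (-(k*m:ℕ):ℤ) (1:R)) • w :=
              smul_smul _ (HahnSeries.single (-(k*m:ℕ):ℤ) (1:R) : LaurentSeries R) _
            rw [e3, e4, LaurentSeries.coe_algebraMap, HahnSeries.ofPowerSeries_C,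
              HahnSeries.C_apply, HahnSeries.single_mul_single, zero_add, mul_one]
          rw [hsm]
          exact N.smul_mem _ (ih e)
        have h3 : HahnSeries.single (-(k*m:ℕ):ℤ) (1:R) •
            ((1 : LaurentSeries R) ⊗ₜ[PowerSeries R] e₂) ∈ N := ih e₂
        rw [← hL, hA]
        exact N.sub_mem (N.sub_mem h1 h2) h3
      intro e'
      have := step ((hcu.unit⁻¹ : (PowerSeries R)ˣ) • e')
      rwa [Units.smul_def, smul_smul, IsUnit.mul_val_inv hcu, one_smul] at this
  rw [Submodule.eq_top_iff']
  intro z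
  induction z with
  | zero => exact N.zero_mem
  | add s t hs ht => exact N.add_mem hs ht
  | tmul f e =>
    by_cases hf : f = 0
    · subst hf; rw [TensorProduct.zero_tmul]; exact N.zero_mem
    · have h1 : f.order.natAbs ≤ f.order.natAbs * m := Nat.le_mul_of_pos_right _ (by omega)
      have hk : (0:ℤ) ≤ f.order + (f.order.natAbs * m : ℕ) := by omega
      have horder : HahnSeries.single (-(f.order.natAbs * m : ℕ) : ℤ) (1:R) *
          algebraMap (PowerSeries R) (LaurentSeries R)
            (PowerSeries.X ^ ((f.order + (f.order.natAbs * m : ℕ)).toNat)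
              * f.powerSeriesPart) = f := by
        rw [map_mul, LaurentSeries.coe_algebraMap, HahnSeries.ofPowerSeries_X_pow,
          ← mul_assoc, HahnSeries.single_mul_single, one_mul]
        have hidx : (-(f.order.natAbs * m : ℕ) : ℤ) +
            ((f.order + (f.order.natAbs * m : ℕ)).toNat : ℤ) = f.order := by omega
        rw [hidx]
        exact f.single_order_mul_powerSeriesPart
      have hrep : f ⊗ₜ[PowerSeries R] e
          = HahnSeries.single (-(f.order.natAbs * m : ℕ) : ℤ) (1:R) •
            ((1 : LaurentSeries R) ⊗ₜ[PowerSeries R]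
              ((PowerSeries.X ^ ((f.order + (f.order.natAbs * m : ℕ)).toNat)
                * f.powerSeriesPart) • e)) := by
        set g : PowerSeries R :=
          PowerSeries.X ^ ((f.order + (f.order.natAbs * m : ℕ)).toNat) * f.powerSeriesPart
          with hg
        have t1 : (1 : LaurentSeries R) ⊗ₜ[PowerSeries R] (g • e)
            = g • ((1 : LaurentSeries R) ⊗ₜ[PowerSeries R] e) :=
          TensorProduct.tmul_smul g (1 : LaurentSeries R) e
        have t2 : g • ((1 : LaurentSeries R) ⊗ₜ[PowerSeries R] e)
            = (algebraMap (PowerSeries R) (LaurentSeries R) g) •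
                ((1 : LaurentSeries R) ⊗ₜ[PowerSeries R] e) :=
          (algebraMap_smul (LaurentSeries R) g _).symm
        have t3 : HahnSeries.single (-(f.order.natAbs * m : ℕ) : ℤ) (1:R) •
              ((algebraMap (PowerSeries R) (LaurentSeries R) g) •
                ((1 : LaurentSeries R) ⊗ₜ[PowerSeries R] e))
            = (HahnSeries.single (-(f.order.natAbs * m : ℕ) : ℤ) (1:R) *
                algebraMap (PowerSeries R) (LaurentSeries R) g) •
                ((1 : LaurentSeries R) ⊗ₜ[PowerSeries R] e) :=
          smul_smul (HahnSeries.single (-(f.order.natAbs * m : ℕ) : ℤ) (1:R) : LaurentSeries R) _ _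
        have t5 : f • ((1 : LaurentSeries R) ⊗ₜ[PowerSeries R] e)
            = (f • (1 : LaurentSeries R)) ⊗ₜ[PowerSeries R] e :=
          TensorProduct.smul_tmul' f (1 : LaurentSeries R) e
        rw [t1, t2, t3, horder, t5, smul_eq_mul, mul_one]
      rw [hrep]
      exact key f.order.natAbs _
end
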